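/- arXiv:2504.18767 — 5 statements merged into one kernel-verified Lean document; each statement's English description precedes it below -/
import Mathlib

section
/- Let G=(V,E) be an undirected graph with an orientation of each edge, and suppose the orientation is k-cut-balanced, i.e., for every nonempty proper subset U of V, |δ⁺(U)| ≥ (1/k)|δ(U)|. Then there exists a function f on the oriented edges with values in {1,...,k-1} satisfying flow conservation at every vertex (i.e., the orientation induces a nowhere-zero k-flow). -/
/-!
The balance condition on `U` is Hoffman's cut condition `|δ⁻(U)| ≤ (k - 1) |δ⁺(U)|` for the bounds
`1 ≤ f ≤ k - 1`, so the theorem is an instance of Hoffman's circulation theorem, which we prove by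
augmenting paths. Among integer flows within the bounds take one minimising the total imbalance
`∑ v, |net inflow at v|`. If it is not a circulation, pick `s` with positive net inflow and let `U`
be the set of vertices reachable from `s` in the residual graph. If `U` contains a vertex of
negative net inflow, pushing one unit along a simple residual path lowers the imbalance. Otherwise
every edge leaving `U` is at its upper bound and every edge entering `U` at its lower bound, so the
positive net inflow into `U` violates the cut condition.
-/

open Finset

theorem Relation.ReflTransGen.exists_nodup_isChain_cons {α : Type*} {r : α → α → Prop} {a b : α}
    (h : Relation.ReflTransGen r a b) :
    ∃ l, List.IsChain r (a :: l) ∧ (a :: l).getLast (List.cons_ne_nil _ _) = b ∧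
      (a :: l).Nodup := by
  induction h using Relation.ReflTransGen.head_induction_on with
  | refl => exact ⟨[], .singleton _, rfl, List.nodup_singleton _⟩
  | @head a c hac _ ih =>
    obtain ⟨l, hchain, hlast, hnodup⟩ := ih
    by_cases ha : a ∈ c :: l
    · obtain ⟨l₁, l₂, hsplit⟩ := List.append_of_mem ha
      simp only [hsplit] at hchain hlast hnodup
      refine ⟨l₂, (List.isChain_split.mp hchain).2, ?_,
        hnodup.sublist (List.sublist_append_right _ _)⟩
      rwa [List.getLast_append_of_ne_nil] at hlast
    · exact ⟨c :: l, hchain.cons_cons hac, by rwa [List.getLast_cons_cons],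
        List.nodup_cons.mpr ⟨ha, hnodup⟩⟩

namespace Circulation

variable {V E : Type*} (src tgt : E → V)

def ResidualAdj (lo hi f : E → ℤ) (u v : V) : Prop :=
  ∃ e, (src e = u ∧ tgt e = v ∧ f e < hi e) ∨ (src e = v ∧ tgt e = u ∧ lo e < f e)

variable [DecidableEq V] [Fintype E]

def outEdges (U : Finset V) : Finset E := univ.filter fun e => src e ∈ U ∧ tgt e ∉ U

def inEdges (U : Finset V) : Finset E := univ.filter fun e => tgt e ∈ U ∧ src e ∉ U

def netInflow (f : E → ℤ) (v : V) : ℤ :=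
  (∑ e, if tgt e = v then f e else 0) - ∑ e, if src e = v then f e else 0

theorem netInflow_add_single [DecidableEq E] (f : E → ℤ) (e₀ : E) (c : ℤ) (w : V) :
    netInflow src tgt (f + Pi.single e₀ c) w =
      netInflow src tgt f w + (if tgt e₀ = w then c else 0) - (if src e₀ = w then c else 0) := by
  have hsplit (g : E → V) : (∑ e, if g e = w then (f + Pi.single e₀ c : E → ℤ) e else 0) =
      (∑ e, if g e = w then f e else 0) + if g e₀ = w then c else 0 := by
    simp only [Pi.add_apply, ite_add_zero, sum_add_distrib, add_right_inj]
    rw [sum_eq_single e₀ (fun e _ he => by simp [he]) (by simp)]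
    simp
  simp only [netInflow, hsplit]
  ring

theorem sum_netInflow (f : E → ℤ) (U : Finset V) :
    ∑ v ∈ U, netInflow src tgt f v =
      ∑ e ∈ inEdges src tgt U, f e - ∑ e ∈ outEdges src tgt U, f e := by
  have hswap (g : E → V) :
      ∑ v ∈ U, (∑ e, if g e = v then f e else 0) = ∑ e, if g e ∈ U then f e else 0 := by
    rw [sum_comm]
    simp [sum_ite_eq]
  simp only [netInflow, sum_sub_distrib, hswap, inEdges, outEdges, sum_filter]
  rw [← sum_sub_distrib, ← sum_sub_distrib]
  refine sum_congr rfl fun e _ => ?_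
  by_cases hs : src e ∈ U <;> by_cases ht : tgt e ∈ U <;> simp [hs, ht]

theorem sum_netInflow_univ [Fintype V] (f : E → ℤ) : ∑ v, netInflow src tgt f v = 0 := by
  simp [sum_netInflow, inEdges, outEdges]

theorem ResidualAdj.exists_push {lo hi f : E → ℤ} {u v : V} (hf : f ∈ Set.Icc lo hi)
    (h : ResidualAdj src tgt lo hi f u v) :
    ∃ f' ∈ Set.Icc lo hi,
      (∀ x y, x ≠ u → y ≠ u → ResidualAdj src tgt lo hi f x y →
        ResidualAdj src tgt lo hi f' x y) ∧
      ∀ w, netInflow src tgt f' w =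
        netInflow src tgt f w - (if u = w then 1 else 0) + (if v = w then 1 else 0) := by
  classical
  have hmem (e₀ : E) (c : ℤ) (hlo : lo e₀ ≤ f e₀ + c) (hhi : f e₀ + c ≤ hi e₀) :
      f + Pi.single e₀ c ∈ Set.Icc lo hi := by
    refine ⟨fun e => ?_, fun e => ?_⟩ <;> rcases eq_or_ne e e₀ with rfl | he
    all_goals simp_all [hf.1 e, hf.2 e]
  have hkeep (e₀ : E) (c : ℤ) (hu : src e₀ = u ∨ tgt e₀ = u) (x y : V) (hx : x ≠ u) (hy : y ≠ u)
      (hxy : ResidualAdj src tgt lo hi f x y) :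
      ResidualAdj src tgt lo hi (f + Pi.single e₀ c) x y := by
    obtain ⟨e, he⟩ := hxy
    have hne : e ≠ e₀ := by rintro rfl; grind
    exact ⟨e, by simpa [hne] using he⟩
  obtain ⟨e₀, ⟨hs, ht, hlt⟩ | ⟨hs, ht, hlt⟩⟩ := h
  · refine ⟨f + Pi.single e₀ 1, hmem e₀ 1 (by linarith [hf.1 e₀]) (by omega),
      hkeep e₀ 1 (.inl hs), fun w => ?_⟩
    rw [netInflow_add_single, hs, ht]
    ring
  · refine ⟨f + Pi.single e₀ (-1), hmem e₀ (-1) (by omega) (by linarith [hf.2 e₀]),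
      hkeep e₀ (-1) (.inr ht), fun w => ?_⟩
    rw [netInflow_add_single, hs, ht]
    split_ifs <;> ring

theorem exists_augment_of_isChain {lo hi : E → ℤ} :
    ∀ (l : List V) {f : E → ℤ} {u : V}, f ∈ Set.Icc lo hi →
      List.IsChain (ResidualAdj src tgt lo hi f) (u :: l) → (u :: l).Nodup →
      ∃ f' ∈ Set.Icc lo hi, ∀ w, netInflow src tgt f' w = netInflow src tgt f w -
        (if u = w then 1 else 0) + (if (u :: l).getLast (List.cons_ne_nil _ _) = w then 1 else 0)
  | [], f, u, hf, _, _ => ⟨f, hf, fun w => (sub_add_cancel _ _).symm⟩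
  | v :: l, f, u, hf, hchain, hnodup => by
    rw [List.isChain_cons_cons] at hchain
    obtain ⟨f₁, hf₁, hres, hnet₁⟩ := hchain.1.exists_push src tgt hf
    have hu : u ∉ v :: l := (List.nodup_cons.mp hnodup).1
    have hchain₁ : (v :: l).IsChain (ResidualAdj src tgt lo hi f₁) :=
      hchain.2.imp_of_mem_imp fun x y hx hy =>
        hres x y (ne_of_mem_of_not_mem hx hu) (ne_of_mem_of_not_mem hy hu)
    obtain ⟨f₂, hf₂, hnet₂⟩ := exists_augment_of_isChain l hf₁ hchain₁ hnodup.of_cons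
    refine ⟨f₂, hf₂, fun w => ?_⟩
    rw [hnet₂, hnet₁, List.getLast_cons_cons]
    ring

theorem sum_netInflow_of_forall_residualAdj_mem {lo hi f : E → ℤ} {U : Finset V}
    (hf : f ∈ Set.Icc lo hi) (hU : ∀ u v, u ∈ U → ResidualAdj src tgt lo hi f u v → v ∈ U) :
    ∑ v ∈ U, netInflow src tgt f v =
      ∑ e ∈ inEdges src tgt U, lo e - ∑ e ∈ outEdges src tgt U, hi e := by
  rw [sum_netInflow]
  congr 1 <;> refine sum_congr rfl fun e he => ?_
  · simp only [inEdges, mem_filter, mem_univ, true_and] at he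
    refine le_antisymm (not_lt.mp fun hlt => he.2 ?_) (hf.1 e)
    exact hU _ _ he.1 ⟨e, .inr ⟨rfl, rfl, hlt⟩⟩
  · simp only [outEdges, mem_filter, mem_univ, true_and] at he
    refine le_antisymm (hf.2 e) (not_lt.mp fun hlt => he.2 ?_)
    exact hU _ _ he.1 ⟨e, .inl ⟨rfl, rfl, hlt⟩⟩

variable [Fintype V]

def imbalance (f : E → ℤ) : ℕ := ∑ v, (netInflow src tgt f v).natAbs

theorem imbalance_lt_of_netInflow_eq {f f' : E → ℤ} {s t : V} (hs : 0 < netInflow src tgt f s)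
    (ht : netInflow src tgt f t < 0)
    (h : ∀ w, netInflow src tgt f' w =
      netInflow src tgt f w - (if s = w then 1 else 0) + (if t = w then 1 else 0)) :
    imbalance src tgt f' < imbalance src tgt f := by
  refine sum_lt_sum (fun w _ => ?_) ⟨s, mem_univ s, ?_⟩
  · rw [h w]
    split_ifs <;> subst_vars <;> omega
  · have hst : s ≠ t := by rintro rfl; omega
    rw [h s, if_pos rfl, if_neg hst.symm]
    omega

theorem exists_imbalance_lt {lo hi f : E → ℤ}
    (hcut : ∀ U, ∑ e ∈ inEdges src tgt U, lo e ≤ ∑ e ∈ outEdges src tgt U, hi e)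
    (hf : f ∈ Set.Icc lo hi) {v : V} (hv : netInflow src tgt f v ≠ 0) :
    ∃ f' ∈ Set.Icc lo hi, imbalance src tgt f' < imbalance src tgt f := by
  classical
  obtain ⟨s, hs⟩ : ∃ s, 0 < netInflow src tgt f s := by
    by_contra! hnonpos
    exact hv <| (sum_eq_zero_iff_of_nonpos fun w _ => hnonpos w).mp
      (sum_netInflow_univ src tgt f) v (mem_univ v)
  set U := univ.filter (Relation.ReflTransGen (ResidualAdj src tgt lo hi f) s)
  by_cases hneg : ∃ t ∈ U, netInflow src tgt f t < 0
  · obtain ⟨t, htU, ht⟩ := hneg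
    obtain ⟨l, hchain, hlast, hnodup⟩ := (mem_filter.mp htU).2.exists_nodup_isChain_cons
    obtain ⟨f', hf', hnet⟩ := exists_augment_of_isChain src tgt l hf hchain hnodup
    exact ⟨f', hf', imbalance_lt_of_netInflow_eq src tgt hs ht (hlast ▸ hnet)⟩
  · push Not at hneg
    have hclosed (u w : V) (hu : u ∈ U) (huw : ResidualAdj src tgt lo hi f u w) : w ∈ U :=
      mem_filter.mpr ⟨mem_univ w, (mem_filter.mp hu).2.tail huw⟩
    have hpos : 0 < ∑ w ∈ U, netInflow src tgt f w :=
      sum_pos' hneg ⟨s, mem_filter.mpr ⟨mem_univ s, .refl⟩, hs⟩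
    rw [sum_netInflow_of_forall_residualAdj_mem src tgt hf hclosed] at hpos
    linarith [hcut U]

theorem exists_circulation_of_cut {lo hi : E → ℤ} (hle : lo ≤ hi)
    (hcut : ∀ U, ∑ e ∈ inEdges src tgt U, lo e ≤ ∑ e ∈ outEdges src tgt U, hi e) :
    ∃ f ∈ Set.Icc lo hi, ∀ v, netInflow src tgt f v = 0 := by
  obtain ⟨f, hf, hmin⟩ :=
    (measure (imbalance src tgt)).wf.has_min (Set.Icc lo hi) ⟨lo, le_rfl, hle⟩
  refine ⟨f, hf, fun v => ?_⟩
  by_contra hv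
  obtain ⟨f', hf', hlt⟩ := exists_imbalance_lt src tgt hcut hf hv
  exact hmin f' hf' hlt

end Circulation

/-- A k-cut-balanced orientation induces a nowhere-zero k-flow:
if for every nonempty proper U, |δ⁺(U)| ≥ (1/k)|δ(U)|, then there is an
integer flow with values in {1,...,k-1} conserved at every vertex. -/
theorem cut_balanced_induces_nwz_flow {V E : Type} [Fintype V] [DecidableEq V] [Fintype E]
    (src tgt : E → V) (k : ℕ) (hk : 2 ≤ k)
    (hbal : ∀ U : Finset V, U.Nonempty → U ≠ Finset.univ →
      ((Finset.univ.filter (fun e => src e ∈ U ∧ tgt e ∉ U)).card : ℝ) ≥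
        (1 / (k : ℝ)) *
          (((Finset.univ.filter (fun e => src e ∈ U ∧ tgt e ∉ U)).card : ℝ) +
            ((Finset.univ.filter (fun e => tgt e ∈ U ∧ src e ∉ U)).card : ℝ))) :
    ∃ f : E → ℤ, (∀ e, 1 ≤ f e ∧ f e ≤ (k : ℤ) - 1) ∧
      (∀ v : V,
        (∑ e : E, if src e = v then f e else 0) =
        (∑ e : E, if tgt e = v then f e else 0)) := by
  have hcut (U : Finset V) :
      ∑ _e ∈ Circulation.inEdges src tgt U, (1 : ℤ) ≤
        ∑ _e ∈ Circulation.outEdges src tgt U, ((k : ℤ) - 1) := by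
    simp only [sum_const, nsmul_eq_mul, mul_one, Circulation.inEdges, Circulation.outEdges]
    rcases U.eq_empty_or_nonempty with rfl | hne
    · simp
    by_cases huniv : U = univ
    · simp [huniv]
    have hk0 : (0 : ℝ) < k := by exact_mod_cast (by omega : 0 < k)
    have h := hbal U hne huniv
    rw [ge_iff_le, one_div, inv_mul_le_iff₀ hk0] at h
    have h' : (#{e | tgt e ∈ U ∧ src e ∉ U} : ℝ) ≤
        #{e | src e ∈ U ∧ tgt e ∉ U} * ((k : ℝ) - 1) := by
      linarith
    exact_mod_cast h'
  obtain ⟨f, hf, hflow⟩ := Circulation.exists_circulation_of_cut src tgt (lo := fun _ => 1)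
    (hi := fun _ => (k : ℤ) - 1) (fun _ => by dsimp only; omega) hcut
  exact ⟨f, fun e => ⟨hf.1 e, hf.2 e⟩, fun v => (sub_eq_zero.mp (hflow v)).symm⟩
end

section
/- Let z* be an extreme point of the polytope P_k = { z ∈ ℝ_{≥0}^{E⁺∪E⁻} : flow conservation at every vertex, 1 ≤ z(e⁺)+z(e⁻) ≤ k−1 for every edge }. Then the set F of edges e for which z*(e⁺) or z*(e⁻) is non-integral contains no cycle (F is a forest). -/
open Finset

/-- Flow conservation for a bidirected assignment `z : E → Bool → ℝ`. -/
def FlowConserv {V E : Type} [Fintype V] [DecidableEq V] [Fintype E]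
    (src tgt : E → V) (z : E → Bool → ℝ) : Prop :=
  ∀ v : V,
    (∑ e : E, ((if src e = v then z e true else 0) + (if tgt e = v then z e false else 0))) =
    (∑ e : E, ((if tgt e = v then z e true else 0) + (if src e = v then z e false else 0)))

/-- Membership in the polytope P_k. -/
def FeasPk {V E : Type} [Fintype V] [DecidableEq V] [Fintype E]
    (src tgt : E → V) (k : ℕ) (z : E → Bool → ℝ) : Prop :=
  (∀ e b, 0 ≤ z e b) ∧ FlowConserv src tgt z ∧
  (∀ e, 1 ≤ z e true + z e false ∧ z e true + z e false ≤ (k : ℝ) - 1)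

/-! If the fractional edges contained a cycle, one could push a small circulation `± ε` around it
and stay in `P_k`, so that `z*` would be the midpoint of two distinct feasible points. On each
edge of the cycle the unit of flow is split between raising the forward arc and lowering the
backward arc so that only non-integral, hence positive, arc values move, and the edge total moves
only when it is non-integral, hence strictly between `1` and `k - 1`. -/

open Filter Topology

lemma pos_of_not_int {x : ℝ} (h : 0 ≤ x) (hx : ¬ ∃ m : ℤ, x = m) : 0 < x :=
  h.lt_of_ne fun h0 => hx ⟨0, by rw [← h0, Int.cast_zero]⟩

lemma eventually_le_add_mul {a b c : ℝ} (h : c ≤ a) (hb : b ≠ 0 → c < a) :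
    ∀ᶠ t in 𝓝 (0 : ℝ), c ≤ a + t * b := by
  rcases eq_or_ne b 0 with rfl | hb0
  · simp [h]
  · have : Tendsto (fun t : ℝ => a + t * b) (𝓝 0) (𝓝 a) :=
      (continuous_const.add (continuous_id.mul continuous_const)).tendsto' 0 a (by simp)
    exact (this.eventually_const_lt (hb hb0)).mono fun _ => le_of_lt

lemma eventually_add_mul_le {a b c : ℝ} (h : a ≤ c) (hb : b ≠ 0 → a < c) :
    ∀ᶠ t in 𝓝 (0 : ℝ), a + t * b ≤ c :=
  (eventually_le_add_mul (neg_le_neg h) fun h0 => neg_lt_neg (hb (neg_ne_zero.1 h0))).mono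
    fun t ht => by linarith

/-- The part of a unit of `src → tgt` flow carried by raising the forward arc `p true`; the rest
is carried by lowering the backward arc `p false`. -/
noncomputable def forwardShare (p : Bool → ℝ) : ℝ :=
  open Classical in
  if ∃ m : ℤ, p true = m then 0 else if ∃ m : ℤ, p false = m then 1 else 1 / 2

noncomputable def arcShift (p : Bool → ℝ) (b : Bool) : ℝ :=
  if b then forwardShare p else forwardShare p - 1

section ArcShift

variable {p : Bool → ℝ}

lemma arcShift_true_sub_false (p : Bool → ℝ) : arcShift p true - arcShift p false = 1 := by
  simp [arcShift]

lemma not_int_of_arcShift_ne_zero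
    (hp : (¬ ∃ m : ℤ, p true = m) ∨ ¬ ∃ m : ℤ, p false = m) {b : Bool}
    (h : arcShift p b ≠ 0) : ¬ ∃ m : ℤ, p b = m := by
  cases b <;> simp only [arcShift, forwardShare] at h <;> split_ifs at h <;> norm_num at h <;>
    tauto

lemma not_int_add_of_arcShift_add_ne_zero
    (hp : (¬ ∃ m : ℤ, p true = m) ∨ ¬ ∃ m : ℤ, p false = m)
    (h : arcShift p true + arcShift p false ≠ 0) : ¬ ∃ m : ℤ, p true + p false = m := by
  rintro ⟨m, hm⟩
  simp only [arcShift, forwardShare, if_true, Bool.false_eq_true, if_false] at h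
  split_ifs at h with h₁ h₂
  · obtain ⟨a, ha⟩ := h₁
    exact hp.elim (· ⟨a, ha⟩) (· ⟨m - a, by push_cast; linarith⟩)
  · obtain ⟨a, ha⟩ := h₂
    exact h₁ ⟨m - a, by push_cast; linarith⟩
  · norm_num at h

end ArcShift

section Feasibility

variable {V E : Type} [Fintype V] [DecidableEq V] [Fintype E] (src tgt : E → V)
  {k : ℕ} {z w : E → Bool → ℝ}

lemma flowConserv_iff :
    FlowConserv src tgt z ↔ ∀ v, ∑ e, (if src e = v then z e true - z e false else 0) =
      ∑ e, (if tgt e = v then z e true - z e false else 0) := by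
  refine forall_congr' fun v => ?_
  rw [← sub_eq_zero, ← sum_sub_distrib, ← sub_eq_zero (a := ∑ e, ite (src e = v) _ _),
    ← sum_sub_distrib, sum_congr rfl fun e _ => ?_]
  split_ifs <;> ring

lemma FlowConserv.add_smul (hz : FlowConserv src tgt z) (hw : FlowConserv src tgt w) (t : ℝ) :
    FlowConserv src tgt (z + t • w) := by
  rw [flowConserv_iff] at *
  intro v
  have hsplit (f : E → V) :
      ∑ e, (if f e = v then (z + t • w) e true - (z + t • w) e false else 0) =
        ∑ e, (if f e = v then z e true - z e false else 0) +
          t * ∑ e, (if f e = v then w e true - w e false else 0) := by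
    rw [mul_sum, ← sum_add_distrib]
    refine sum_congr rfl fun e _ => ?_
    simp only [Pi.add_apply, Pi.smul_apply, smul_eq_mul]
    split_ifs <;> ring
  rw [hsplit, hsplit, hz v, hw v]

lemma FeasPk.one_lt_and_lt_of_not_int (hz : FeasPk src tgt k z) {e : E}
    (he : ¬ ∃ m : ℤ, z e true + z e false = m) :
    1 < z e true + z e false ∧ z e true + z e false < k - 1 :=
  ⟨(hz.2.2 e).1.lt_of_ne fun h => he ⟨1, by rw [← h, Int.cast_one]⟩,
    (hz.2.2 e).2.lt_of_ne fun h => he ⟨k - 1, by rw [h]; push_cast; ring⟩⟩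

lemma FeasPk.eventually_add_smul (hz : FeasPk src tgt k z) (hw : FlowConserv src tgt w)
    (hpos : ∀ e b, w e b ≠ 0 → 0 < z e b)
    (hslack : ∀ e, w e true + w e false ≠ 0 →
      1 < z e true + z e false ∧ z e true + z e false < k - 1) :
    ∀ᶠ t in 𝓝 (0 : ℝ), FeasPk src tgt k (z + t • w) := by
  obtain ⟨hnn, hflow, hbd⟩ := hz
  have hnn' (e : E) (b : Bool) : ∀ᶠ t in 𝓝 (0 : ℝ), 0 ≤ z e b + t * w e b :=
    eventually_le_add_mul (hnn e b) (hpos e b)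
  have hlo (e : E) : ∀ᶠ t in 𝓝 (0 : ℝ),
      1 ≤ (z e true + z e false) + t * (w e true + w e false) :=
    eventually_le_add_mul (hbd e).1 fun h => (hslack e h).1
  have hhi (e : E) : ∀ᶠ t in 𝓝 (0 : ℝ),
      (z e true + z e false) + t * (w e true + w e false) ≤ k - 1 :=
    eventually_add_mul_le (hbd e).2 fun h => (hslack e h).2
  filter_upwards [eventually_all.2 fun e => eventually_all.2 (hnn' e), eventually_all.2 hlo,
    eventually_all.2 hhi] with t h₀ h₁ h₂
  refine ⟨h₀, hflow.add_smul src tgt hw t, fun e => ?_⟩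
  simp only [Pi.add_apply, Pi.smul_apply, smul_eq_mul]
  constructor <;> linarith [h₁ e, h₂ e]

lemma FeasPk.eq_zero_of_extreme (hz : FeasPk src tgt k z)
    (hext : ∀ z₁ z₂, FeasPk src tgt k z₁ → FeasPk src tgt k z₂ →
      (∀ e b, z e b = (z₁ e b + z₂ e b) / 2) → z₁ = z₂)
    (hw : FlowConserv src tgt w) (hpos : ∀ e b, w e b ≠ 0 → 0 < z e b)
    (hslack : ∀ e, w e true + w e false ≠ 0 →
      1 < z e true + z e false ∧ z e true + z e false < k - 1) :
    w = 0 := by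
  have h := hz.eventually_add_smul src tgt hw hpos hslack
  have hneg : Tendsto (fun t : ℝ => -t) (𝓝 0) (𝓝 0) := by simpa using tendsto_neg (0 : ℝ)
  obtain ⟨t, ⟨h₁, h₂⟩, ht⟩ :=
    (((h.and (hneg.eventually h)).filter_mono nhdsWithin_le_nhds).and
      (self_mem_nhdsWithin (s := {0}ᶜ))).exists
  have heq := hext _ _ h₁ h₂ fun e b => by simp only [Pi.add_apply, Pi.smul_apply]; ring
  have h2t : (t + t) • w = 0 := by
    rw [add_smul, add_eq_zero_iff_eq_neg, ← neg_smul]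
    exact add_left_cancel heq
  exact (smul_eq_zero.1 h2t).resolve_left fun h0 => ht (by linarith : t = 0)

end Feasibility

section Cycle

variable {V E : Type} (src tgt : E → V) {n : ℕ} (es : ZMod (n + 1) → E)
  (vs : ZMod (n + 1) → V)

noncomputable def cycleSign (i : ZMod (n + 1)) : ℝ :=
  open Classical in
  if src (es i) = vs i ∧ tgt (es i) = vs (i + 1) then 1 else -1

noncomputable def cycleFlow (e : E) : ℝ :=
  open Classical in
  ∑ i, if es i = e then cycleSign src tgt es vs i else 0

variable {src tgt es vs}

lemma cycleSign_ne_zero (i : ZMod (n + 1)) : cycleSign src tgt es vs i ≠ 0 := by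
  unfold cycleSign; split_ifs <;> norm_num

lemma cycleFlow_apply (hinj : Function.Injective es) (i : ZMod (n + 1)) :
    cycleFlow src tgt es vs (es i) = cycleSign src tgt es vs i := by
  simp [cycleFlow, hinj.eq_iff]

lemma exists_eq_of_cycleFlow_ne_zero {e : E} (he : cycleFlow src tgt es vs e ≠ 0) :
    ∃ i, es i = e := by
  by_contra! h
  exact he (sum_eq_zero fun i _ => if_neg (h i))

lemma sum_ite_cycleFlow [DecidableEq V] [Fintype E] (f : E → V) (v : V) :
    ∑ e, (if f e = v then cycleFlow src tgt es vs e else 0) =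
      ∑ i, if f (es i) = v then cycleSign src tgt es vs i else 0 := by
  classical
  calc _ = ∑ e, ∑ i,
        if es i = e then (if f e = v then cycleSign src tgt es vs i else 0) else 0 :=
        sum_congr rfl fun e _ => by split_ifs <;> simp [cycleFlow, *]
    _ = _ := by rw [sum_comm]; simp

lemma cycleSign_src_sub_tgt [DecidableEq V]
    (horient : ∀ i, (src (es i) = vs i ∧ tgt (es i) = vs (i + 1)) ∨
      (src (es i) = vs (i + 1) ∧ tgt (es i) = vs i)) (i : ZMod (n + 1)) (v : V) :
    (if src (es i) = v then cycleSign src tgt es vs i else 0) -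
        (if tgt (es i) = v then cycleSign src tgt es vs i else 0) =
      (if vs i = v then 1 else 0) - (if vs (i + 1) = v then 1 else 0) := by
  unfold cycleSign
  rcases horient i with ⟨h₁, h₂⟩ | ⟨h₁, h₂⟩
  · simp [h₁, h₂]
  · by_cases hc : vs (i + 1) = vs i
    · simp [h₁, h₂, hc]
    · simp only [h₁, h₂, hc, false_and, if_false]
      split_ifs <;> norm_num

lemma cycleFlow_isCirculation [DecidableEq V] [Fintype E]
    (horient : ∀ i, (src (es i) = vs i ∧ tgt (es i) = vs (i + 1)) ∨
      (src (es i) = vs (i + 1) ∧ tgt (es i) = vs i)) (v : V) :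
    ∑ e, (if src e = v then cycleFlow src tgt es vs e else 0) =
      ∑ e, (if tgt e = v then cycleFlow src tgt es vs e else 0) := by
  rw [← sub_eq_zero, sum_ite_cycleFlow, sum_ite_cycleFlow, ← sum_sub_distrib,
    sum_congr rfl fun i _ => cycleSign_src_sub_tgt horient i v, sum_sub_distrib, sub_eq_zero]
  exact (Fintype.sum_equiv (Equiv.addRight 1) _ _ fun _ => rfl).symm

end Cycle

theorem fractional_edges_acyclic_general {V E : Type} [Fintype V] [DecidableEq V] [Fintype E]
    (src tgt : E → V) (k : ℕ)
    (zs : E → Bool → ℝ) (hfeas : FeasPk src tgt k zs)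
    (hext : ∀ z₁ z₂, FeasPk src tgt k z₁ → FeasPk src tgt k z₂ →
      (∀ e b, zs e b = (z₁ e b + z₂ e b) / 2) → z₁ = z₂) :
    ¬ ∃ (n : ℕ) (es : ZMod (n + 1) → E) (vs : ZMod (n + 1) → V),
        Function.Injective es ∧
        (∀ i, (¬ ∃ m : ℤ, zs (es i) true = (m : ℝ)) ∨
              (¬ ∃ m : ℤ, zs (es i) false = (m : ℝ))) ∧
        (∀ i, (src (es i) = vs i ∧ tgt (es i) = vs (i + 1)) ∨
              (src (es i) = vs (i + 1) ∧ tgt (es i) = vs i)) := by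
  rintro ⟨n, es, vs, hinj, hfrac, horient⟩
  set c := cycleFlow src tgt es vs
  have hcycle_frac (e : E) (he : c e ≠ 0) :
      (¬ ∃ m : ℤ, zs e true = m) ∨ ¬ ∃ m : ℤ, zs e false = m := by
    obtain ⟨i, rfl⟩ := exists_eq_of_cycleFlow_ne_zero he
    exact hfrac i
  have hw : (fun e b => c e * arcShift (zs e) b) = 0 := by
    refine hfeas.eq_zero_of_extreme src tgt hext ?_ (fun e b h => ?_) (fun e h => ?_)
    · refine (flowConserv_iff src tgt).2 fun v => ?_
      simpa only [← mul_sub, arcShift_true_sub_false, mul_one] using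
        cycleFlow_isCirculation horient v
    · obtain ⟨hc, ha⟩ := mul_ne_zero_iff.1 h
      exact pos_of_not_int (hfeas.1 e b) (not_int_of_arcShift_ne_zero (hcycle_frac e hc) ha)
    · obtain ⟨hc, ha⟩ := mul_ne_zero_iff.1 ((mul_add _ _ _).trans_ne h)
      exact hfeas.one_lt_and_lt_of_not_int src tgt
        (not_int_add_of_arcShift_add_ne_zero (hcycle_frac e hc) ha)
  obtain ⟨b, hb⟩ : ∃ b, arcShift (zs (es 0)) b ≠ 0 := by
    by_contra! h
    simpa [h] using arcShift_true_sub_false (zs (es 0))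
  have hc : c (es 0) ≠ 0 := (cycleFlow_apply hinj 0).trans_ne (cycleSign_ne_zero 0)
  exact mul_ne_zero hc hb (congrFun (congrFun hw (es 0)) b)

/-- At an extreme point z* of P_k, the set of edges with a
non-integral coordinate contains no (undirected) cycle, i.e., there is no
closed walk through distinct fractional edges. -/
theorem fractional_edges_acyclic {V E : Type} [Fintype V] [DecidableEq V] [Fintype E]
    (src tgt : E → V) (k : ℕ) (hk : 2 ≤ k)
    (zs : E → Bool → ℝ) (hfeas : FeasPk src tgt k zs)
    (hext : ∀ z₁ z₂, FeasPk src tgt k z₁ → FeasPk src tgt k z₂ →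
      (∀ e b, zs e b = (z₁ e b + z₂ e b) / 2) → z₁ = z₂) :
    ¬ ∃ (n : ℕ) (es : ZMod (n + 1) → E) (vs : ZMod (n + 1) → V),
        Function.Injective es ∧
        (∀ i, (¬ ∃ m : ℤ, zs (es i) true = (m : ℝ)) ∨
              (¬ ∃ m : ℤ, zs (es i) false = (m : ℝ))) ∧
        (∀ i, (src (es i) = vs i ∧ tgt (es i) = vs (i + 1)) ∨
              (src (es i) = vs (i + 1) ∧ tgt (es i) = vs i)) :=
  fractional_edges_acyclic_general src tgt k zs hfeas hext
end

section
/- The projection of the polytope { (y,z) : flow conservation on z at every vertex, y(e⁺)+y(e⁻)=1 for every edge, y ≤ z ≤ (k−1)y, y ≥ 0 } onto the z-coordinates equals the polytope { z ≥ 0 : flow conservation at every vertex, 1 ≤ z(e⁺)+z(e⁻) ≤ k−1 for every edge }. -/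
/- Flow conservation involves only `z`, and the remaining constraints decouple over the edges:
on a single edge, `z` is sandwiched between a probability vector `y` and `(k - 1) y` exactly
when `z ≥ 0` and `1 ≤ z(e⁺) + z(e⁻) ≤ k - 1`, the witness being `y = z / (z(e⁺) + z(e⁻))`. -/

open Finset

theorem exists_sum_eq_one_le_le_mul_iff {ι : Type*} [Fintype ι] (c : ℝ) (w : ι → ℝ) :
    (∃ p : ι → ℝ, (∀ i, 0 ≤ p i) ∧ ∑ i, p i = 1 ∧ ∀ i, p i ≤ w i ∧ w i ≤ c * p i) ↔
      (∀ i, 0 ≤ w i) ∧ 1 ≤ ∑ i, w i ∧ ∑ i, w i ≤ c := by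
  constructor
  · rintro ⟨p, hp0, hp1, hpw⟩
    refine ⟨fun i => (hp0 i).trans (hpw i).1, ?_, ?_⟩
    · calc 1 = ∑ i, p i := hp1.symm
        _ ≤ ∑ i, w i := sum_le_sum fun i _ => (hpw i).1
    · calc ∑ i, w i ≤ ∑ i, c * p i := sum_le_sum fun i _ => (hpw i).2
        _ = c := by rw [← mul_sum, hp1, mul_one]
  · rintro ⟨hw0, hsum_ge, hsum_le⟩
    have hsum_pos : 0 < ∑ i, w i := one_pos.trans_le hsum_ge
    refine ⟨fun i => w i / ∑ j, w j, fun i => div_nonneg (hw0 i) hsum_pos.le, ?_, fun i => ⟨?_, ?_⟩⟩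
    · rw [← sum_div, div_self hsum_pos.ne']
    · exact div_le_self (hw0 i) hsum_ge
    · rw [mul_div_assoc', le_div_iff₀ hsum_pos, mul_comm c]
      exact mul_le_mul_of_nonneg_left hsum_le (hw0 i)

theorem projection_onto_z_general {V E : Type} [Fintype V] [DecidableEq V] [Fintype E]
    (src tgt : E → V) (k : ℕ) :
    ∀ z : E → Bool → ℝ,
      (∃ y : E → Bool → ℝ,
        (∀ e b, 0 ≤ y e b) ∧
        (∀ e, y e true + y e false = 1) ∧
        (∀ e b, y e b ≤ z e b ∧ z e b ≤ ((k : ℝ) - 1) * y e b) ∧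
        FlowConserv src tgt z)
      ↔ ((∀ e b, 0 ≤ z e b) ∧ FlowConserv src tgt z ∧
          (∀ e, 1 ≤ z e true + z e false ∧ z e true + z e false ≤ (k : ℝ) - 1)) := by
  intro z
  have edge (e : E) := exists_sum_eq_one_le_le_mul_iff ((k : ℝ) - 1) (z e)
  simp only [Fintype.sum_bool] at edge
  constructor
  · rintro ⟨y, hy0, hy1, hyz, hflow⟩
    have hz e := (edge e).1 ⟨y e, hy0 e, hy1 e, hyz e⟩
    exact ⟨fun e => (hz e).1, hflow, fun e => (hz e).2⟩
  · rintro ⟨hz0, hflow, hsum⟩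
    choose y hy using fun e => (edge e).2 ⟨hz0 e, hsum e⟩
    exact ⟨y, fun e => (hy e).1, fun e => (hy e).2.1, fun e => (hy e).2.2, hflow⟩

/-- The projection onto the z-coordinates of the polytope
{ (y,z) : flow conservation on z, y(e⁺)+y(e⁻)=1, y ≤ z ≤ (k−1)y, y ≥ 0 }
equals { z ≥ 0 : flow conservation, 1 ≤ z(e⁺)+z(e⁻) ≤ k−1 }. -/
theorem projection_onto_z {V E : Type} [Fintype V] [DecidableEq V] [Fintype E]
    (src tgt : E → V) (k : ℕ) (hk : 2 ≤ k) :
    ∀ z : E → Bool → ℝ,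
      (∃ y : E → Bool → ℝ,
        (∀ e b, 0 ≤ y e b) ∧
        (∀ e, y e true + y e false = 1) ∧
        (∀ e b, y e b ≤ z e b ∧ z e b ≤ ((k : ℝ) - 1) * y e b) ∧
        FlowConserv src tgt z)
      ↔ ((∀ e b, 0 ≤ z e b) ∧ FlowConserv src tgt z ∧
          (∀ e, 1 ≤ z e true + z e false ∧ z e true + z e false ≤ (k : ℝ) - 1)) :=
  projection_onto_z_general src tgt k
end

section
/- Let y ∈ ℝ^{E⁺∪E⁻} satisfy y(e⁺)+y(e⁻)=1 for every edge e, y ≥ 0, and suppose there exists z with flow conservation and y ≤ z ≤ (k−1)y. Then for every subset U of vertices, y(δ⁺(U)) ≤ ((k−1)/k)·|δ_E(U)|. -/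
open Finset

/-! Summing flow conservation of `z` over the vertices of `U` shows that `z` leaves `U`
exactly as much as it enters. Hence `y(δ⁺(U)) ≤ z(δ⁺(U)) = z(δ⁻(U)) ≤ (k-1) y(δ⁻(U))`, and since
`y(δ⁺(U)) + y(δ⁻(U)) = |δ_E(U)|`, this rearranges to `k y(δ⁺(U)) ≤ (k-1) |δ_E(U)|`. -/

section Cut

variable {V E : Type} [Fintype E] [DecidableEq V] (src tgt : E → V)

/-- The value `w(δ⁺(U))` of `w` on the arcs leaving `U`: `w e true` is the value on the arc
`src e → tgt e`, `w e false` the value on the reverse arc. Swapping `src` and `tgt` gives the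
value `w(δ⁻(U))` on the arcs entering `U`. -/
def cutOut (U : Finset V) (w : E → Bool → ℝ) : ℝ :=
  ∑ e : E, ((if src e ∈ U ∧ tgt e ∉ U then w e true else 0) +
            (if tgt e ∈ U ∧ src e ∉ U then w e false else 0))

theorem cutOut_add_cutOut_swap (U : Finset V) {y : E → Bool → ℝ}
    (hy : ∀ e, y e true + y e false = 1) :
    cutOut src tgt U y + cutOut tgt src U y =
      #{e | (src e ∈ U ∧ tgt e ∉ U) ∨ (tgt e ∈ U ∧ src e ∉ U)} := by
  rw [cutOut, cutOut, ← sum_add_distrib, ← sum_boole]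
  refine sum_congr rfl fun e _ => ?_
  by_cases hs : src e ∈ U <;> by_cases ht : tgt e ∈ U <;> simp [hs, ht, hy e, add_comm (y e false)]

variable {src tgt}

theorem cutOut_mono (U : Finset V) {w w' : E → Bool → ℝ} (h : w ≤ w') :
    cutOut src tgt U w ≤ cutOut src tgt U w' := by
  unfold cutOut
  gcongr with e
  · split_ifs
    · exact h e true
    · rfl
  · split_ifs
    · exact h e false
    · rfl

theorem cutOut_smul (U : Finset V) (c : ℝ) (w : E → Bool → ℝ) :
    cutOut src tgt U (c • w) = c * cutOut src tgt U w := by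
  simp only [cutOut, mul_sum, mul_add, Pi.smul_apply, smul_eq_mul, mul_ite, mul_zero]

namespace FlowConserv

variable [Fintype V] {z : E → Bool → ℝ}

theorem sum_tail_mem_eq_sum_head_mem (hz : FlowConserv src tgt z) (U : Finset V) :
    ∑ e : E, ((if src e ∈ U then z e true else 0) + (if tgt e ∈ U then z e false else 0)) =
      ∑ e : E, ((if tgt e ∈ U then z e true else 0) + (if src e ∈ U then z e false else 0)) := by
  have incident (a b : V) (p q : ℝ) :
      (∑ v ∈ U, ((if a = v then p else 0) + (if b = v then q else 0))) =
        (if a ∈ U then p else 0) + (if b ∈ U then q else 0) := by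
    rw [sum_add_distrib, sum_ite_eq, sum_ite_eq]
  simp only [← incident]
  rw [sum_comm, sum_comm (s := univ)]
  exact sum_congr rfl fun v _ => hz v

theorem cutOut_eq_cutOut_swap (hz : FlowConserv src tgt z) (U : Finset V) :
    cutOut src tgt U z = cutOut tgt src U z := by
  -- edges inside `U` contribute to both sides of `sum_tail_mem_eq_sum_head_mem` alike
  have edgewise : ∀ e : E,
      ((if src e ∈ U ∧ tgt e ∉ U then z e true else 0) +
        (if tgt e ∈ U ∧ src e ∉ U then z e false else 0)) -
      ((if tgt e ∈ U ∧ src e ∉ U then z e true else 0) +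
        (if src e ∈ U ∧ tgt e ∉ U then z e false else 0)) =
      ((if src e ∈ U then z e true else 0) + (if tgt e ∈ U then z e false else 0)) -
      ((if tgt e ∈ U then z e true else 0) + (if src e ∈ U then z e false else 0)) := by
    intro e
    by_cases hs : src e ∈ U <;> by_cases ht : tgt e ∈ U <;> simp [hs, ht]
  rw [← sub_eq_zero, cutOut, cutOut, ← sum_sub_distrib, sum_congr rfl fun e _ => edgewise e,
    sum_sub_distrib, sum_tail_mem_eq_sum_head_mem hz, sub_self]

end FlowConserv

end Cut

theorem fractional_orientation_cut_bound_general {V E : Type} [Fintype V] [DecidableEq V] [Fintype E]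
    (src tgt : E → V) (k : ℕ) (hk : 2 ≤ k)
    (y : E → Bool → ℝ)
    (hy1 : ∀ e, y e true + y e false = 1)
    (hz : ∃ z : E → Bool → ℝ, FlowConserv src tgt z ∧
      ∀ e b, y e b ≤ z e b ∧ z e b ≤ ((k : ℝ) - 1) * y e b) :
    ∀ U : Finset V,
      (∑ e : E, ((if src e ∈ U ∧ tgt e ∉ U then y e true else 0) +
                 (if tgt e ∈ U ∧ src e ∉ U then y e false else 0))) ≤
        (((k : ℝ) - 1) / (k : ℝ)) *
          ((Finset.univ.filter (fun e =>
            (src e ∈ U ∧ tgt e ∉ U) ∨ (tgt e ∈ U ∧ src e ∉ U))).card : ℝ) := by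
  obtain ⟨z, hzc, hzy⟩ := hz
  intro U
  have hout : cutOut src tgt U y ≤ cutOut src tgt U z := cutOut_mono U fun e b => (hzy e b).1
  have hin : cutOut tgt src U z ≤ (k - 1) * cutOut tgt src U y := by
    rw [← cutOut_smul]
    exact cutOut_mono U fun e b => (hzy e b).2
  have hcut := hzc.cutOut_eq_cutOut_swap U
  have htotal := cutOut_add_cutOut_swap src tgt U hy1
  have hk0 : (0 : ℝ) < k := Nat.cast_pos.mpr (by omega)
  change cutOut src tgt U y ≤ _
  rw [div_mul_eq_mul_div, le_div_iff₀ hk0]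
  linear_combination hout + hcut + hin + ((k : ℝ) - 1) * htotal

/-- If y ≥ 0 with y(e⁺)+y(e⁻)=1 for every edge, and there exists a
circulation z with y ≤ z ≤ (k−1)y, then for every U ⊆ V,
y(δ⁺(U)) ≤ ((k−1)/k)·|δ_E(U)|. -/
theorem fractional_orientation_cut_bound {V E : Type} [Fintype V] [DecidableEq V] [Fintype E]
    (src tgt : E → V) (k : ℕ) (hk : 2 ≤ k)
    (y : E → Bool → ℝ) (hy0 : ∀ e b, 0 ≤ y e b)
    (hy1 : ∀ e, y e true + y e false = 1)
    (hz : ∃ z : E → Bool → ℝ, FlowConserv src tgt z ∧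
      ∀ e b, y e b ≤ z e b ∧ z e b ≤ ((k : ℝ) - 1) * y e b) :
    ∀ U : Finset V,
      (∑ e : E, ((if src e ∈ U ∧ tgt e ∉ U then y e true else 0) +
                 (if tgt e ∈ U ∧ src e ∉ U then y e false else 0))) ≤
        (((k : ℝ) - 1) / (k : ℝ)) *
          ((Finset.univ.filter (fun e =>
            (src e ∈ U ∧ tgt e ∉ U) ∨ (tgt e ∈ U ∧ src e ∉ U))).card : ℝ) :=
  fractional_orientation_cut_bound_general src tgt k hk y hy1 hz
end

section
/- Let (Ē, f) be a nowhere-zero 6-flow on an undirected graph G with nonnegative symmetric costs c, and suppose f is locally optimal: for every directed cycle C contained in Ē, Σ_{e∈C} c(e)f(e) ≤ 3·Σ_{e∈C} c(e). Then Σ_{e∈Ē} c(e)f(e) ≤ 3·Σ_{e∈Ē} c(e). Consequently, f costs at most 3 times the cost of any nowhere-zero flow on G. -/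
/-!
Peeling off directed cycles of its support decomposes the nonnegative circulation `f` into
cycles, so summing local optimality over them gives `∑ c f² ≤ 3 ∑ c f`. Together with
`0 ≤ ∑ c (f - 3)² = ∑ c f² - 6 ∑ c f + 9 ∑ c` this yields `∑ c f ≤ 3 ∑ c`, and every
nowhere-zero flow `g` costs at least `∑ c`.
-/

open Finset Function

theorem Function.periodicPts_nonempty_of_finite {α : Type*} [Finite α] [Nonempty α] (s : α → α) :
    (periodicPts s).Nonempty := by
  obtain ⟨x⟩ := ‹Nonempty α›
  obtain ⟨m, n, hne, heq⟩ := Finite.exists_ne_map_eq_of_infinite (s^[·] x)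
  wlog hmn : m < n generalizing m n
  · exact this n m hne.symm heq.symm (by omega)
  refine ⟨s^[m] x, mk_mem_periodicPts (n := n - m) (by omega) ?_⟩
  rw [IsPeriodicPt, IsFixedPt, ← iterate_add_apply, Nat.sub_add_cancel hmn.le]
  exact heq.symm

theorem Function.exists_cycle_of_finite {α : Type*} [Finite α] [Nonempty α] (s : α → α) :
    ∃ (n : ℕ) (x : ZMod (n + 1) → α), Injective x ∧ ∀ i, x (i + 1) = s (x i) := by
  obtain ⟨x₀, hx₀⟩ := periodicPts_nonempty_of_finite s
  obtain ⟨n, hn⟩ := Nat.exists_eq_add_one.mpr (minimalPeriod_pos_of_mem_periodicPts hx₀)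
  refine ⟨n, fun i => s^[i.val] x₀, fun i j hij => ZMod.val_injective _ ?_, fun i => ?_⟩
  · exact iterate_injOn_Iio_minimalPeriod (by simp [hn, i.val_lt]) (by simp [hn, j.val_lt]) hij
  · dsimp only
    have hmod := iterate_mod_minimalPeriod_eq (f := s) (x := x₀) (n := i.val + 1)
    rw [hn] at hmod
    rw [ZMod.val_add, ZMod.val_one_eq_one_mod, Nat.add_mod_mod, hmod, iterate_succ_apply']

section Circulation

variable {V E : Type*} [Fintype E] {src tgt : E → V}

def IsDirectedCycle (src tgt : E → V) {n : ℕ} (es : ZMod (n + 1) → E) : Prop :=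
  Injective es ∧ ∀ i, tgt (es i) = src (es (i + 1))

theorem IsDirectedCycle.sum_mul_indicator {n : ℕ} {es : ZMod (n + 1) → E}
    (hC : IsDirectedCycle src tgt es) (h : E → ℤ) :
    ∑ e, h e * (Set.range es).indicator 1 e = ∑ i, h (es i) := by
  classical
  simp only [Set.indicator_apply, Pi.one_apply, mul_ite, mul_one, mul_zero]
  rw [sum_ite, sum_const_zero, add_zero, ← sum_image hC.1.injOn]
  congr 1
  ext e
  simp

variable [DecidableEq V]

def IsCirculation (src tgt : E → V) (g : E → ℤ) : Prop :=
  ∀ v : V, (∑ e, if src e = v then g e else 0) = ∑ e, if tgt e = v then g e else 0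

variable {g : E → ℤ}

theorem IsCirculation.sub {h : E → ℤ} (hg : IsCirculation src tgt g)
    (hh : IsCirculation src tgt h) : IsCirculation src tgt (g - h) := by
  intro v
  have hsplit (st : E → V) : (∑ e, if st e = v then (g - h) e else 0) =
      (∑ e, if st e = v then g e else 0) - ∑ e, if st e = v then h e else 0 := by
    rw [← sum_sub_distrib]
    exact sum_congr rfl fun e _ => by split_ifs <;> simp
  rw [hsplit, hsplit, hg v, hh v]

theorem IsDirectedCycle.isCirculation_indicator {n : ℕ} {es : ZMod (n + 1) → E}
    (hC : IsDirectedCycle src tgt es) :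
    IsCirculation src tgt ((Set.range es).indicator (1 : E → ℤ)) := by
  intro v
  have hcount (st : E → V) : (∑ e, if st e = v then (Set.range es).indicator 1 e else 0) =
      ∑ i, if st (es i) = v then (1 : ℤ) else 0 := by
    rw [← hC.sum_mul_indicator fun e => if st e = v then 1 else 0]
    exact sum_congr rfl fun e _ => by split_ifs <;> simp
  rw [hcount, hcount]
  simp only [hC.2]
  exact (Equiv.sum_comp (Equiv.addRight 1) fun i => if src (es i) = v then (1 : ℤ) else 0).symm

theorem IsCirculation.exists_out_pos (hcirc : IsCirculation src tgt g) (hg : 0 ≤ g) {e : E}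
    (he : 0 < g e) : ∃ e', src e' = tgt e ∧ 0 < g e' := by
  by_contra! hout
  have hout_zero : (∑ e', if src e' = tgt e then g e' else 0) = 0 :=
    sum_eq_zero fun e' _ => by split_ifs with h <;> [exact (hout e' h).antisymm (hg e'); rfl]
  have hin_pos : g e ≤ ∑ e', if tgt e' = tgt e then g e' else 0 := by
    simpa using single_le_sum (f := fun e' => if tgt e' = tgt e then g e' else 0)
      (fun e' _ => by split_ifs <;> [exact hg e'; rfl]) (mem_univ e)
  linarith [hcirc (tgt e)]

theorem IsCirculation.exists_isDirectedCycle (hcirc : IsCirculation src tgt g) (hg : 0 ≤ g)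
    {e : E} (he : 0 < g e) :
    ∃ (n : ℕ) (es : ZMod (n + 1) → E), IsDirectedCycle src tgt es ∧ ∀ i, 0 < g (es i) := by
  choose! next hnext_src hnext_pos using fun e (he : 0 < g e) => hcirc.exists_out_pos hg he
  have : Nonempty {e // 0 < g e} := ⟨⟨e, he⟩⟩
  obtain ⟨n, x, hinj, hsucc⟩ :=
    exists_cycle_of_finite fun e : {e // 0 < g e} => (⟨next e, hnext_pos e e.2⟩ : {e // 0 < g e})
  refine ⟨n, fun i => x i, ⟨Subtype.val_injective.comp hinj, fun i => ?_⟩, fun i => (x i).2⟩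
  simp only [hsucc, hnext_src _ (x i).2]

theorem IsCirculation.sum_mul_le_of_forall_isDirectedCycle {u w : E → ℤ}
    (huw : ∀ (n : ℕ) (es : ZMod (n + 1) → E), IsDirectedCycle src tgt es →
      ∑ i, u (es i) ≤ ∑ i, w (es i))
    (hcirc : IsCirculation src tgt g) (hg : 0 ≤ g) : ∑ e, u e * g e ≤ ∑ e, w e * g e := by
  induction hN : (∑ e, g e).toNat using Nat.strong_induction_on generalizing g with
  | _ N ih =>
  obtain hzero | ⟨e, he⟩ : g = 0 ∨ ∃ e, 0 < g e := by
    by_contra! h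
    exact h.1 (funext fun e => (h.2 e).antisymm (hg e))
  · simp [hzero]
  obtain ⟨n, es, hC, hpos⟩ := hcirc.exists_isDirectedCycle hg he
  set χ := (Set.range es).indicator (1 : E → ℤ)
  have hχ_le : χ ≤ g := fun e => by
    by_cases h : e ∈ Set.range es
    · obtain ⟨i, rfl⟩ := h
      simp only [χ, Set.indicator_of_mem (Set.mem_range_self i), Pi.one_apply]
      exact hpos i
    · simpa [χ, h] using hg e
  have hsplit (h : E → ℤ) : ∑ e, h e * g e = ∑ e, h e * (g - χ) e + ∑ i, h (es i) := by
    rw [← hC.sum_mul_indicator, ← sum_add_distrib]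
    exact sum_congr rfl fun e _ => by simp only [Pi.sub_apply, χ]; ring
  have hsmaller : (∑ e, (g - χ) e).toNat < N := by
    have hsum := hsplit 1
    have hrest_nonneg : 0 ≤ ∑ e, (g - χ) e := sum_nonneg fun e _ => sub_nonneg.2 (hχ_le e)
    simp only [Pi.one_apply, one_mul, sum_const, card_univ, ZMod.card, nsmul_eq_mul, mul_one] at hsum
    omega
  have hrest := ih _ hsmaller (hcirc.sub hC.isCirculation_indicator) (sub_nonneg.2 hχ_le) rfl
  rw [hsplit u, hsplit w]
  linarith [huw n es hC]

end Circulation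

theorem Finset.sum_mul_le_of_sum_mul_sq_le {ι R : Type*} [CommRing R] [LinearOrder R]
    [IsStrictOrderedRing R] {s : Finset ι} {c f : ι → R} {a : R} (ha : 0 < a)
    (hc : ∀ i ∈ s, 0 ≤ c i) (h : ∑ i ∈ s, c i * f i ^ 2 ≤ a * ∑ i ∈ s, c i * f i) :
    ∑ i ∈ s, c i * f i ≤ a * ∑ i ∈ s, c i := by
  have hsq : 0 ≤ ∑ i ∈ s, c i * (f i - a) ^ 2 :=
    sum_nonneg fun i hi => mul_nonneg (hc i hi) (sq_nonneg _)
  have hexpand : ∑ i ∈ s, c i * (f i - a) ^ 2 =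
      ∑ i ∈ s, c i * f i ^ 2 - 2 * a * ∑ i ∈ s, c i * f i + a ^ 2 * ∑ i ∈ s, c i := by
    simp only [mul_sum, ← sum_sub_distrib, ← sum_add_distrib]
    exact sum_congr rfl fun i _ => by ring
  refine le_of_mul_le_mul_left ?_ ha
  nlinarith

theorem locally_optimal_three_approx_general {V E : Type} [DecidableEq V] [Fintype E]
    (src tgt : E → V) (c : E → ℤ) (hc : ∀ e, 0 ≤ c e)
    (f : E → ℤ) (hf : ∀ e, 1 ≤ f e ∧ f e ≤ 5)
    (hcons : ∀ v : V,
      (∑ e : E, if src e = v then f e else 0) =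
      (∑ e : E, if tgt e = v then f e else 0))
    (hlocal : ∀ (n : ℕ) (es : ZMod (n + 1) → E), Function.Injective es →
      (∀ i, tgt (es i) = src (es (i + 1))) →
      (∑ i : ZMod (n + 1), c (es i) * f (es i)) ≤ 3 * ∑ i : ZMod (n + 1), c (es i)) :
    ((∑ e : E, c e * f e) ≤ 3 * ∑ e : E, c e) ∧
    (∀ (o : E → Bool) (g : E → ℤ), (∀ e, 1 ≤ g e) →
      (∀ v : V,
        (∑ e : E, if src e = v then (if o e then g e else -g e) else 0) =
        (∑ e : E, if tgt e = v then (if o e then g e else -g e) else 0)) →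
      (∑ e : E, c e * f e) ≤ 3 * ∑ e : E, c e * g e) := by
  have hcycle : ∑ e, c e * f e * f e ≤ ∑ e, 3 * c e * f e :=
    IsCirculation.sum_mul_le_of_forall_isDirectedCycle
      (fun n es hC => by simpa only [mul_sum] using hlocal n es hC.1 hC.2)
      hcons fun e => zero_le_one.trans (hf e).1
  have hbound : ∑ e, c e * f e ≤ 3 * ∑ e, c e :=
    sum_mul_le_of_sum_mul_sq_le three_pos (fun e _ => hc e)
      (by simpa only [pow_two, mul_assoc, mul_sum] using hcycle)
  refine ⟨hbound, fun o g hg _ => hbound.trans ?_⟩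
  gcongr with e
  exact le_mul_of_one_le_right (hc e) (hg e)

/-- A locally optimal nowhere-zero 6-flow (Ē, f) — where no directed
cycle C in Ē has Σ_{e∈C} c(e)f(e) > 3Σ_{e∈C} c(e) — satisfies
Σ c(e)f(e) ≤ 3Σ c(e); consequently its cost is at most 3 times the cost of any
nowhere-zero flow on the same graph (with symmetric costs c). The edge set E with
maps src, tgt is the oriented graph Ē; an arbitrary nowhere-zero flow is an
orientation `o : E → Bool` with positive flow values `g` conserved at every vertex. -/
theorem locally_optimal_three_approx {V E : Type} [Fintype V] [DecidableEq V] [Fintype E]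
    (src tgt : E → V) (c : E → ℤ) (hc : ∀ e, 0 ≤ c e)
    (f : E → ℤ) (hf : ∀ e, 1 ≤ f e ∧ f e ≤ 5)
    (hcons : ∀ v : V,
      (∑ e : E, if src e = v then f e else 0) =
      (∑ e : E, if tgt e = v then f e else 0))
    (hlocal : ∀ (n : ℕ) (es : ZMod (n + 1) → E), Function.Injective es →
      (∀ i, tgt (es i) = src (es (i + 1))) →
      (∑ i : ZMod (n + 1), c (es i) * f (es i)) ≤ 3 * ∑ i : ZMod (n + 1), c (es i)) :
    ((∑ e : E, c e * f e) ≤ 3 * ∑ e : E, c e) ∧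
    (∀ (o : E → Bool) (g : E → ℤ), (∀ e, 1 ≤ g e) →
      (∀ v : V,
        (∑ e : E, if src e = v then (if o e then g e else -g e) else 0) =
        (∑ e : E, if tgt e = v then (if o e then g e else -g e) else 0)) →
      (∑ e : E, c e * f e) ≤ 3 * ∑ e : E, c e * g e) :=
  locally_optimal_three_approx_general src tgt c hc f hf hcons hlocal
end
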